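/- For any N > d and M > d there is a constant C_{N,M} such that for all x, y ∈ ℝ^d: ⟨x − y⟩^{−M} ≤ C_{N,M} ∑_{β ∈ ℤ^d} ⟨x − β⟩^{−M} ⟨β − y⟩^{−N}. -/

import Mathlib

/-! A single lattice point suffices: choose `β` within sup-distance `1` of `y`. Then
`⟨β − y⟩ ≤ √2` and `⟨x − β⟩ ≤ 2 ⟨x − y⟩`, so the `β`-th term of the sum alone is at least
`2^{−M} 2^{−N/2} ⟨x − y⟩^{−M}`. -/

open scoped ENNReal

noncomputable def jap {E : Type*} [NormedAddCommGroup E] (x : E) : ℝ :=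
  Real.sqrt (1 + ‖x‖ ^ 2)

section Jap

variable {E : Type*} [NormedAddCommGroup E]

lemma jap_pos (x : E) : 0 < jap x :=
  Real.sqrt_pos.2 (by positivity)

lemma jap_le_sqrt_two {x : E} (hx : ‖x‖ ≤ 1) : jap x ≤ Real.sqrt 2 :=
  Real.sqrt_le_sqrt (by nlinarith [norm_nonneg x])

lemma jap_add_le_two_mul {a b : E} (hb : ‖b‖ ≤ 1) : jap (a + b) ≤ 2 * jap a := by
  have hab : ‖a + b‖ ^ 2 ≤ (‖a‖ + 1) ^ 2 :=
    pow_le_pow_left₀ (norm_nonneg _) ((norm_add_le a b).trans (by linarith)) 2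
  rw [jap, Real.sqrt_le_iff, mul_pow, jap, Real.sq_sqrt (by positivity)]
  exact ⟨by positivity, by nlinarith [sq_nonneg (‖a‖ - 1)]⟩

lemma jap_sub_rpow_neg_le {x y c : E} (hyc : ‖y - c‖ ≤ 1) {M N : ℝ} (hM : 0 ≤ M)
    (hN : 0 ≤ N) :
    jap (x - y) ^ (-M) ≤ 2 ^ M * Real.sqrt 2 ^ N * (jap (x - c) ^ (-M) * jap (c - y) ^ (-N)) := by
  have hxc : jap (x - c) ≤ 2 * jap (x - y) := by
    simpa only [sub_add_sub_cancel] using jap_add_le_two_mul (a := x - y) hyc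
  have hcy : jap (c - y) ≤ Real.sqrt 2 := jap_le_sqrt_two (by rwa [norm_sub_rev])
  have hxy := jap_pos (x - y)
  have hxc₀ := jap_pos (x - c)
  have hcy₀ := jap_pos (c - y)
  rw [Real.rpow_neg hxy.le, Real.rpow_neg hxc₀.le, Real.rpow_neg hcy₀.le, ← mul_inv,
    ← div_eq_mul_inv, le_div_iff₀ (by positivity), inv_mul_le_iff₀ (by positivity)]
  calc jap (x - c) ^ M * jap (c - y) ^ N ≤ (2 * jap (x - y)) ^ M * Real.sqrt 2 ^ N := by
        gcongr
    _ = jap (x - y) ^ M * (2 ^ M * Real.sqrt 2 ^ N) := by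
        rw [Real.mul_rpow zero_le_two hxy.le]; ring

end Jap

lemma exists_int_norm_sub_le_one {ι : Type*} [Fintype ι] (y : ι → ℝ) :
    ∃ β : ι → ℤ, ‖y - fun i => (β i : ℝ)‖ ≤ 1 := by
  refine ⟨fun i => ⌊y i⌋, (pi_norm_le_iff_of_nonneg zero_le_one).2 fun i => ?_⟩
  rw [Pi.sub_apply, Int.self_sub_floor, Real.norm_eq_abs, abs_of_nonneg (Int.fract_nonneg _)]
  exact (Int.fract_lt_one _).le

theorem stmt13_general (d : ℕ) (N M : ℝ) (hN : (d : ℝ) < N) (hM : (d : ℝ) < M) :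
    ∃ C : ℝ, 0 < C ∧ ∀ x y : Fin d → ℝ,
      ENNReal.ofReal (jap (x - y) ^ (-M))
        ≤ ENNReal.ofReal C *
            ∑' β : Fin d → ℤ,
              ENNReal.ofReal
                (jap (x - fun i => (β i : ℝ)) ^ (-M) *
                  jap ((fun i => (β i : ℝ)) - y) ^ (-N)) := by
  have hM₀ : 0 ≤ M := (Nat.cast_nonneg d).trans hM.le
  have hN₀ : 0 ≤ N := (Nat.cast_nonneg d).trans hN.le
  refine ⟨2 ^ M * Real.sqrt 2 ^ N, by positivity, fun x y => ?_⟩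
  obtain ⟨β, hβ⟩ := exists_int_norm_sub_le_one y
  calc ENNReal.ofReal (jap (x - y) ^ (-M))
      ≤ ENNReal.ofReal (2 ^ M * Real.sqrt 2 ^ N *
          (jap (x - fun i => (β i : ℝ)) ^ (-M) * jap ((fun i => (β i : ℝ)) - y) ^ (-N))) :=
        ENNReal.ofReal_le_ofReal (jap_sub_rpow_neg_le hβ hM₀ hN₀)
    _ = ENNReal.ofReal (2 ^ M * Real.sqrt 2 ^ N) *
          ENNReal.ofReal (jap (x - fun i => (β i : ℝ)) ^ (-M) *
            jap ((fun i => (β i : ℝ)) - y) ^ (-N)) :=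
        ENNReal.ofReal_mul (by positivity)
    _ ≤ _ := by gcongr; exact ENNReal.le_tsum β

/-- For `N > d`, `M > d` there is `C` with
`⟨x−y⟩^{−M} ≤ C ∑_{β ∈ ℤ^d} ⟨x−β⟩^{−M} ⟨β−y⟩^{−N}` for all `x, y ∈ ℝ^d`. -/
theorem stmt13 (d : ℕ) (hd : 1 ≤ d) (N M : ℝ) (hN : (d : ℝ) < N) (hM : (d : ℝ) < M) :
    ∃ C : ℝ, 0 < C ∧ ∀ x y : Fin d → ℝ,
      ENNReal.ofReal (jap (x - y) ^ (-M))
        ≤ ENNReal.ofReal C *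
            ∑' β : Fin d → ℤ,
              ENNReal.ofReal
                (jap (x - fun i => (β i : ℝ)) ^ (-M) *
                  jap ((fun i => (β i : ℝ)) - y) ^ (-N)) :=
  stmt13_general d N M hN hM
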